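/- Let w ∈ W^J and suppose D ∈ H^{J,a,*} satisfies: (1) D = Σ_{y ∈ W^J, y ≥ w} r_y S_y^{J,a} with r_w = 1 and r_y ∈ ⊕_{i=0}^{ℓ(y)−ℓ(w)−1} R_i for all y ∈ W^J with y > w; and (2) conj(D) = q^{ℓ(w)} D. Then D = D_w^{J,a}, i.e., ⟨D, C_x^{J,a}⟩ = (−1)^{ℓ(w)} δ_{w,x} for all x ∈ W^J. -/

import Mathlib

/-! In `D(C_x) = Σ_y P_{y,x} D(T_y)` only the `y` with `w ≤ y ≤ x` contribute, so `D(C_w) = D(T_w)`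
and `D(C_x) = 0` unless `w ≤ x`. For `w < x` put `m = ℓ(x) - ℓ(w)` and `r = D(C_x)`: the degree
bounds on `P_{y,x}` and on the coefficients of `D` place `r` in degrees `[0, m)`, while the bar
invariance of `C_x` and of `D` gives `conj r = q^{-m} r`. The left side lives in degrees `(-m, 0]`,
the right side in `[-2m, -m)`, so `r = 0`. -/

namespace KLPaper

open Polynomial
open scoped Classical

variable {B : Type*} {W : Type*} [Group W] {M : CoxeterMatrix B}

/-- The Bruhat order on a Coxeter group: generated by right multiplication by
reflections which increases the length. -/
def bruhatLE (cs : CoxeterSystem M W) : W → W → Prop :=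
  Relation.ReflTransGen (fun x y =>
    (∃ t, cs.IsReflection t ∧ y = x * t) ∧ cs.length x < cs.length y)

/-- A commutative ring `R` containing `ℤ[q,q⁻¹]`, with a direct sum decomposition
`R = ⊕_{k ∈ ℤ} R_k` into additive subgroups and an involutive ring endomorphism `conj`
such that `R_i R_j ⊆ R_{i+j}`, `conj R_i = R_{-i}`, `1 ∈ R_0`, `q ∈ R_2`, `conj q = q⁻¹`. -/
structure KLRing (R : Type*) [CommRing R] where
  q : R
  qinv : R
  q_qinv : q * qinv = 1
  grade : ℤ → AddSubgroup R
  decomp : DirectSum.IsInternal grade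
  conj : R →+* R
  conj_conj : ∀ r : R, conj (conj r) = r
  grade_mul : ∀ (i j : ℤ) (r s : R), r ∈ grade i → s ∈ grade j → r * s ∈ grade (i + j)
  conj_grade : ∀ (i : ℤ) (r : R), r ∈ grade i → conj r ∈ grade (-i)
  one_mem : (1 : R) ∈ grade 0
  q_mem : q ∈ grade 2
  conj_q : conj q = qinv
  laurent_inj : Function.Injective fun f : ℤ →₀ ℤ =>
    f.sum fun k c => c • (if 0 ≤ k then q ^ k.toNat else qinv ^ (-k).toNat)

variable {R : Type*} [CommRing R]

/-- The subgroup `R_0 + R_1 + ⋯ + R_{n-1} = ⊕_{i=0}^{n-1} R_i` of `R`. -/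
def KLRing.gradeSum (K : KLRing R) (n : ℕ) : AddSubgroup R :=
  ⨆ i ∈ Finset.range n, K.grade (i : ℤ)

/-- `r` belongs to `ℤ[q] ⊆ R`. -/
def KLRing.InZq (K : KLRing R) (r : R) : Prop :=
  ∃ p : Polynomial ℤ, Polynomial.aeval K.q p = r

/-- The Hecke algebra of `(W, S)` over `R`: the free `R`-module with basis
`{T_w}_{w ∈ W}`, with multiplication determined by `T_{w₁} T_{w₂} = T_{w₁ w₂}`
whenever `ℓ(w₁w₂) = ℓ(w₁) + ℓ(w₂)` and `(T_s + 1)(T_s - q) = 0` for `s ∈ S`. -/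
structure Hecke (cs : CoxeterSystem M W) (R : Type*) [CommRing R] (q : R) where
  carrier : Type*
  [ring : Ring carrier]
  [alg : Algebra R carrier]
  T : W → carrier
  basis : Module.Basis W R carrier
  basis_eq : ∀ w : W, basis w = T w
  T_mul : ∀ w₁ w₂ : W, cs.length (w₁ * w₂) = cs.length w₁ + cs.length w₂ →
    T w₁ * T w₂ = T (w₁ * w₂)
  T_quad : ∀ i : B, (T (cs.simple i) + 1) * (T (cs.simple i) - algebraMap R carrier q) = 0

attribute [instance] Hecke.ring Hecke.alg

variable {cs : CoxeterSystem M W}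

/-- `bar` is the bar involution `Σ r_w T_w ↦ Σ conj(r_w) (T_{w⁻¹})⁻¹` of the Hecke algebra. -/
def IsBar (K : KLRing R) (Hk : Hecke cs R K.q) (bar : Hk.carrier →+* Hk.carrier) : Prop :=
  ∀ (r : R) (w : W), bar (r • Hk.T w) = K.conj r • Ring.inverse (Hk.T w⁻¹)

/-- `j` is the involution `j(Σ r_w T_w) = Σ r_w (-q)^{ℓ(w)} (T_{w⁻¹})⁻¹` of the Hecke algebra. -/
def IsJ (K : KLRing R) (Hk : Hecke cs R K.q) (j : Hk.carrier →ₐ[R] Hk.carrier) : Prop :=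
  ∀ w : W, j (Hk.T w) = (-K.q) ^ cs.length w • Ring.inverse (Hk.T w⁻¹)

/-- `C` is the Kazhdan–Lusztig basis element `C_w`:
`C = Σ_{y ≤ w} P_{y,w} T_y` with `P_{w,w} = 1`,
`P_{y,w} ∈ ⊕_{i=0}^{ℓ(w)-ℓ(y)-1} R_i` for `y < w`, and `bar C = q^{-ℓ(w)} C`.
(The coefficient `P_{y,w}` of `C_w` is `Hk.basis.repr C y`.) -/
def IsKLElt (K : KLRing R) (Hk : Hecke cs R K.q)
    (bar : Hk.carrier →+* Hk.carrier) (w : W) (C : Hk.carrier) : Prop :=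
  Hk.basis.repr C w = 1 ∧
  (∀ y : W, Hk.basis.repr C y ≠ 0 → bruhatLE cs y w) ∧
  (∀ y : W, bruhatLE cs y w → y ≠ w →
    Hk.basis.repr C y ∈ K.gradeSum (cs.length w - cs.length y)) ∧
  bar C = K.qinv ^ cs.length w • C

/-- The standard parabolic subgroup `W_J = ⟨J⟩`. -/
def WJ (cs : CoxeterSystem M W) (J : Set B) : Subgroup W :=
  Subgroup.closure (cs.simple '' J)

/-- `W^J`: the set of minimal length coset representatives of `W/W_J`,
i.e. the `w ∈ W` with `ws > w` for all `s ∈ J`. -/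
def minReps (cs : CoxeterSystem M W) (J : Set B) : Set W :=
  {w | ∀ i ∈ J, cs.length w < cs.length (w * cs.simple i)}

/-- The Hecke algebra `H(W_J)` of the standard parabolic subgroup `W_J`
(with generating set `J`; the length function of `(W_J, J)` is the restriction
of that of `(W, S)`). -/
structure HeckeJ (cs : CoxeterSystem M W) (J : Set B) (R : Type*) [CommRing R] (q : R) where
  carrier : Type*
  [ring : Ring carrier]
  [alg : Algebra R carrier]
  T : WJ cs J → carrier
  basis : Module.Basis (WJ cs J) R carrier
  basis_eq : ∀ x, basis x = T x
  T_mul : ∀ x₁ x₂ : WJ cs J,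
    cs.length ((x₁ : W) * (x₂ : W)) = cs.length (x₁ : W) + cs.length (x₂ : W) →
    T x₁ * T x₂ = T (x₁ * x₂)
  T_quad : ∀ (i : B) (hi : i ∈ J),
    (T ⟨cs.simple i, Subgroup.subset_closure ⟨i, hi, rfl⟩⟩ + 1) *
      (T ⟨cs.simple i, Subgroup.subset_closure ⟨i, hi, rfl⟩⟩ - algebraMap R carrier q) = 0

attribute [instance] HeckeJ.ring HeckeJ.alg

/-- `(Mod, φ)` is (a realization of) the induced module `H^{J,a} = H ⊗_{H(W_J)} R^a`
together with `φ = φ^{J,a} : h ↦ h ⊗ 1^a`:  `φ` is surjective and its kernel is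
the `R`-span of the elements `h (T_s - a)`, `s ∈ J`, which is exactly the kernel of
`h ↦ h ⊗ 1^a`. -/
def IsInduced {q : R} (Hk : Hecke cs R q) (J : Set B) (a : R)
    (Mod : Type*) [AddCommGroup Mod] [Module R Mod] (φ : Hk.carrier →ₗ[R] Mod) : Prop :=
  Function.Surjective φ ∧
  LinearMap.ker φ = Submodule.span R
    {h : Hk.carrier | ∃ (g : Hk.carrier) (i : B), i ∈ J ∧
      h = g * (Hk.T (cs.simple i) - algebraMap R Hk.carrier a)}

/-- `C` is the parabolic Kazhdan–Lusztig basis element `C_w^{J,a}` of `H^{J,a}`: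
`C = Σ_{y ∈ W^J, y ≤ w} P^{J,a}_{y,w} T_y^{J,a}` with `P^{J,a}_{w,w} = 1`,
`P^{J,a}_{y,w} ∈ ⊕_{i=0}^{ℓ(w)-ℓ(y)-1} R_i` for `y < w`, and `barJ C = q^{-ℓ(w)} C`,
where `b` is the basis `(T_y^{J,a})_{y ∈ W^J}` of `H^{J,a}` and `barJ` its bar involution.
(The coefficient `P^{J,a}_{y,w}` of `C_w^{J,a}` is `b.repr C y`.) -/
def IsKLEltJ (K : KLRing R) {J : Set B} {Mod : Type*} [AddCommGroup Mod] [Module R Mod]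
    (b : Module.Basis (minReps cs J) R Mod) (barJ : Mod →+ Mod)
    (w : minReps cs J) (C : Mod) : Prop :=
  b.repr C w = 1 ∧
  (∀ y : minReps cs J, b.repr C y ≠ 0 → bruhatLE cs y.1 w.1) ∧
  (∀ y : minReps cs J, bruhatLE cs y.1 w.1 → y ≠ w →
    b.repr C y ∈ K.gradeSum (cs.length w.1 - cs.length y.1)) ∧
  barJ C = K.qinv ^ cs.length w.1 • C

open scoped Pointwise

theorem bruhatLE.length_le {x y : W} (h : bruhatLE cs x y) : cs.length x ≤ cs.length y := by
  induction h with
  | refl => exact le_rfl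
  | tail _ hstep ih => exact ih.trans hstep.2.le

theorem bruhatLE.length_lt {x y : W} (h : bruhatLE cs x y) (hne : x ≠ y) :
    cs.length x < cs.length y := by
  rcases Relation.ReflTransGen.cases_head h with rfl | ⟨z, hxz, hzy⟩
  · exact absurd rfl hne
  · exact hxz.2.trans_le (bruhatLE.length_le hzy)

theorem bruhatLE.antisymm {x y : W} (h : bruhatLE cs x y) (h' : bruhatLE cs y x) : x = y := by
  by_contra hne
  exact (h.length_lt hne).not_ge h'.length_le

theorem _root_.AddSubgroup.neg_one_pow_mul_mem_iff {H : AddSubgroup R} {r : R} (n : ℕ) :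
    (-1) ^ n * r ∈ H ↔ r ∈ H := by
  rcases n.even_or_odd with hn | hn <;> simp [hn.neg_one_pow]

namespace KLRing

variable (K : KLRing R)

def gradeOn (s : Set ℤ) : AddSubgroup R :=
  ⨆ i ∈ s, K.grade i

variable {K}

theorem grade_le_gradeOn {i : ℤ} {s : Set ℤ} (hi : i ∈ s) : K.grade i ≤ K.gradeOn s :=
  le_iSup₂ (f := fun j (_ : j ∈ s) => K.grade j) i hi

theorem gradeOn_mono {s t : Set ℤ} (h : s ⊆ t) : K.gradeOn s ≤ K.gradeOn t :=
  biSup_mono h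

theorem gradeSum_eq_gradeOn (n : ℕ) : K.gradeSum n = K.gradeOn (Set.Ico 0 n) := by
  refine le_antisymm (iSup₂_le fun i hi => grade_le_gradeOn ?_) (iSup₂_le fun i hi => ?_)
  · simpa using hi
  · obtain ⟨hi0, hin⟩ := hi
    lift i to ℕ using hi0
    exact le_iSup₂ (f := fun (j : ℕ) (_ : j ∈ Finset.range n) => K.grade (j : ℤ)) i
      (Finset.mem_range.2 (by omega))

theorem gradeSum_mono {m n : ℕ} (h : m ≤ n) : K.gradeSum m ≤ K.gradeSum n := by
  simp only [gradeSum_eq_gradeOn]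
  exact gradeOn_mono (Set.Ico_subset_Ico_right (by exact_mod_cast h))

theorem disjoint_gradeOn {s t : Set ℤ} (hst : Disjoint s t) (hs : s.Finite) :
    Disjoint (K.gradeOn s) (K.gradeOn t) :=
  K.decomp.addSubgroup_iSupIndep.disjoint_biSup_biSup' hst hs

theorem conj_mem_gradeOn {s : Set ℤ} {r : R} (hr : r ∈ K.gradeOn s) :
    K.conj r ∈ K.gradeOn (-s) := by
  suffices K.gradeOn s ≤ (K.gradeOn (-s)).comap K.conj.toAddMonoidHom from this hr
  exact iSup₂_le fun i hi r hr =>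
    grade_le_gradeOn (Set.neg_mem_neg.2 hi) (K.conj_grade i r hr)

theorem mul_mem_gradeOn {s t : Set ℤ} {r r' : R} (hr : r ∈ K.gradeOn s)
    (hr' : r' ∈ K.gradeOn t) : r * r' ∈ K.gradeOn (s + t) := by
  suffices K.gradeOn s ≤ (K.gradeOn (s + t)).comap (AddMonoidHom.mulRight r') from this hr
  refine iSup₂_le fun i hi r hr => ?_
  suffices K.gradeOn t ≤ (K.gradeOn (s + t)).comap (AddMonoidHom.mulLeft r) from this hr'
  exact iSup₂_le fun j hj r' hr' =>
    grade_le_gradeOn (Set.add_mem_add hi hj) (K.grade_mul i j r r' hr hr')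

theorem one_mem_gradeSum_one : (1 : R) ∈ K.gradeSum 1 := by
  rw [gradeSum_eq_gradeOn]
  exact grade_le_gradeOn (by simp) K.one_mem

theorem gradeSum_mul_mem {m n : ℕ} {r r' : R} (hr : r ∈ K.gradeSum m)
    (hr' : r' ∈ K.gradeSum n) : r * r' ∈ K.gradeSum (m + n - 1) := by
  rw [gradeSum_eq_gradeOn] at *
  refine gradeOn_mono ?_ (mul_mem_gradeOn hr hr')
  rintro _ ⟨i, ⟨hi0, him⟩, j, ⟨hj0, hjn⟩, rfl⟩
  have hmn : 1 ≤ m + n := by omega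
  simp only [Set.mem_Ico, Nat.cast_sub hmn, Nat.cast_add, Nat.cast_one]
  omega

theorem conj_qinv : K.conj K.qinv = K.q := by
  rw [← K.conj_q, K.conj_conj]

theorem q_pow_mem (n : ℕ) : K.q ^ n ∈ K.grade (2 * n) := by
  induction n with
  | zero => simpa using K.one_mem
  | succ n ih =>
    rw [pow_succ]
    convert K.grade_mul _ _ _ _ ih K.q_mem using 2
    push_cast
    ring

theorem qinv_pow_mem_gradeOn (n : ℕ) : K.qinv ^ n ∈ K.gradeOn {-(2 * n : ℤ)} := by
  rw [← K.conj_q, ← map_pow]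
  exact grade_le_gradeOn (Set.mem_singleton _) (K.conj_grade _ _ (K.q_pow_mem n))

theorem eq_zero_of_conj_eq_qinv_pow_mul {m : ℕ} {r : R} (hr : r ∈ K.gradeSum m)
    (h : K.conj r = K.qinv ^ m * r) : r = 0 := by
  rw [gradeSum_eq_gradeOn] at hr
  have hdisj : Disjoint (-Set.Ico (0 : ℤ) m) (({-(2 * m : ℤ)} : Set ℤ) + Set.Ico (0 : ℤ) m) := by
    rw [Set.disjoint_left]
    rintro x hx ⟨_, rfl, j, hj, rfl⟩
    simp only [Set.mem_neg, Set.mem_Ico] at hx hj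
    omega
  have hconj : K.conj r = 0 :=
    AddSubgroup.disjoint_def.1 (disjoint_gradeOn hdisj (Set.finite_Ico _ _).neg)
      (conj_mem_gradeOn hr) (h ▸ mul_mem_gradeOn (K.qinv_pow_mem_gradeOn m) hr)
  rw [← K.conj_conj r, hconj, map_zero]

end KLRing

theorem _root_.Module.Basis.apply_eq_sum_repr_mul {ι M : Type*} [AddCommGroup M] [Module R M]
    (b : Module.Basis ι R M) (D : M →ₗ[R] R) (v : M) :
    D v = (b.repr v).sum fun i c => c * D (b i) := by
  conv_lhs => rw [← b.linearCombination_repr v]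
  simp [Finsupp.linearCombination_apply, map_finsuppSum]

namespace IsKLEltJ

variable {K : KLRing R} {J : Set B} {Mod : Type*} [AddCommGroup Mod] [Module R Mod]
  {b : Module.Basis (minReps cs J) R Mod} {barJ : Mod →+ Mod} {x w : minReps cs J} {C : Mod}
  {D : Mod →ₗ[R] R}

theorem bruhatLE_of_mul_ne_zero (hC : IsKLEltJ K b barJ x C)
    (hsupp : ∀ y : minReps cs J, D (b y) ≠ 0 → bruhatLE cs w.1 y.1) {y : minReps cs J}
    (hy : b.repr C y * D (b y) ≠ 0) : bruhatLE cs w.1 y.1 ∧ bruhatLE cs y.1 x.1 :=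
  ⟨hsupp y (right_ne_zero_of_mul hy), hC.2.1 y (left_ne_zero_of_mul hy)⟩

theorem eval_self (hC : IsKLEltJ K b barJ w C)
    (hsupp : ∀ y : minReps cs J, D (b y) ≠ 0 → bruhatLE cs w.1 y.1)
    (hw : (-1 : R) ^ cs.length w.1 * D (b w) = 1) : D C = (-1) ^ cs.length w.1 := by
  rw [b.apply_eq_sum_repr_mul D, Finsupp.sum_eq_single w, hC.1, one_mul]
  · exact (left_inv_eq_right_inv (by simp [← mul_pow]) hw).symm
  · intro y _ hyw
    by_contra hy
    obtain ⟨hwy, hyw'⟩ := hC.bruhatLE_of_mul_ne_zero hsupp hy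
    exact hyw (Subtype.ext (hyw'.antisymm hwy))
  · exact fun _ => zero_mul _

theorem eval_eq_zero_of_not_bruhatLE (hC : IsKLEltJ K b barJ x C)
    (hsupp : ∀ y : minReps cs J, D (b y) ≠ 0 → bruhatLE cs w.1 y.1)
    (hwx : ¬bruhatLE cs w.1 x.1) : D C = 0 := by
  rw [b.apply_eq_sum_repr_mul D]
  refine Finset.sum_eq_zero fun y _ => ?_
  by_contra hy
  obtain ⟨hwy, hyx⟩ := hC.bruhatLE_of_mul_ne_zero hsupp hy
  exact hwx (hwy.trans hyx)

theorem eval_mem_gradeSum (hC : IsKLEltJ K b barJ x C)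
    (hsupp : ∀ y : minReps cs J, D (b y) ≠ 0 → bruhatLE cs w.1 y.1)
    (hw : (-1 : R) ^ cs.length w.1 * D (b w) = 1)
    (hgr : ∀ y : minReps cs J, bruhatLE cs w.1 y.1 → y ≠ w →
      (-1 : R) ^ cs.length y.1 * D (b y) ∈ K.gradeSum (cs.length y.1 - cs.length w.1))
    (hxw : x ≠ w) : D C ∈ K.gradeSum (cs.length x.1 - cs.length w.1) := by
  rw [b.apply_eq_sum_repr_mul D]
  refine sum_mem fun y _ => show b.repr C y * D (b y) ∈ _ from ?_
  by_cases hy : b.repr C y * D (b y) = 0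
  · rw [hy]
    exact zero_mem _
  obtain ⟨hwy, hyx⟩ := hC.bruhatLE_of_mul_ne_zero hsupp hy
  rw [← AddSubgroup.neg_one_pow_mul_mem_iff (cs.length y.1), mul_left_comm]
  by_cases hyx' : y = x
  · subst hyx'
    rw [hC.1, one_mul]
    exact hgr y hwy hxw
  -- `r_w = 1` has degree `0`, so one bound `r_y ∈ ⊕_{i ≤ ℓ(y) - ℓ(w)} R_i` covers every `y ≥ w`.
  have hcoeff : (-1 : R) ^ cs.length y.1 * D (b y) ∈
      K.gradeSum (cs.length y.1 - cs.length w.1 + 1) := by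
    by_cases hyw : y = w
    · subst hyw
      simpa [hw] using K.one_mem_gradeSum_one
    · exact K.gradeSum_mono (by omega) (hgr y hwy hyw)
  have hlen := hwy.length_le
  have hlen' := hyx.length_lt fun h => hyx' (Subtype.ext h)
  exact K.gradeSum_mono (by omega) (K.gradeSum_mul_mem (hC.2.2.1 y hyx hyx') hcoeff)

theorem conj_eval (hC : IsKLEltJ K b barJ x C)
    (hdual : ∀ k : Mod, K.conj (D (barJ k)) = K.q ^ cs.length w.1 * D k)
    (hwx : cs.length w.1 ≤ cs.length x.1) :
    K.conj (D C) = K.qinv ^ (cs.length x.1 - cs.length w.1) * D C := by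
  have h := hdual C
  rw [hC.2.2.2, map_smul, smul_eq_mul, map_mul, map_pow, K.conj_qinv] at h
  obtain ⟨m, hm⟩ := Nat.exists_eq_add_of_le hwx
  rw [hm] at h ⊢
  rw [Nat.add_sub_cancel_left]
  have hqm : (K.q * K.qinv) ^ (cs.length w.1 + m) = 1 := by rw [K.q_qinv, one_pow]
  have hqw : (K.q * K.qinv) ^ cs.length w.1 = 1 := by rw [K.q_qinv, one_pow]
  linear_combination K.qinv ^ (cs.length w.1 + m) * h - K.conj (D C) * hqm +
    K.qinv ^ m * D C * hqw

end IsKLEltJ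

theorem statement16_general (K : KLRing R) (J : Set B)
    (Mod : Type*) [AddCommGroup Mod] [Module R Mod]
    (b : Module.Basis (minReps cs J) R Mod)
    (barJ : Mod →+ Mod)
    (CJ : minReps cs J → Mod) (hCJ : ∀ u : minReps cs J, IsKLEltJ K b barJ u (CJ u))
    (w : minReps cs J) (D : Mod →ₗ[R] R)
    (hsupp : ∀ y : minReps cs J, D (b y) ≠ 0 → bruhatLE cs w.1 y.1)
    (hw : (-1 : R) ^ cs.length w.1 * D (b w) = 1)
    (hgr : ∀ y : minReps cs J, bruhatLE cs w.1 y.1 → y ≠ w →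
      (-1 : R) ^ cs.length y.1 * D (b y) ∈ K.gradeSum (cs.length y.1 - cs.length w.1))
    (hdual : ∀ k : Mod, K.conj (D (barJ k)) = K.q ^ cs.length w.1 * D k) :
    ∀ x : minReps cs J, D (CJ x) = if x = w then (-1 : R) ^ cs.length w.1 else 0 := by
  intro x
  split_ifs with hxw
  · subst hxw
    exact (hCJ x).eval_self hsupp hw
  by_cases hwx : bruhatLE cs w.1 x.1
  · have hlen := hwx.length_le
    exact K.eq_zero_of_conj_eq_qinv_pow_mul ((hCJ x).eval_mem_gradeSum hsupp hw hgr hxw)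
      ((hCJ x).conj_eval hdual hlen)
  · exact (hCJ x).eval_eq_zero_of_not_bruhatLE hsupp hwx

/-- if `D ∈ H^{J,a,*} = Hom_R(H^{J,a}, R)` satisfies
`D = Σ_{y ∈ W^J, y ≥ w} r_y S_y^{J,a}` with `r_w = 1` and
`r_y ∈ ⊕_{i=0}^{ℓ(y)-ℓ(w)-1} R_i` for `y > w` in `W^J`, and `conj D = q^{ℓ(w)} D`,
then `D = D_w^{J,a}`, i.e. `⟨D, C_x^{J,a}⟩ = (-1)^{ℓ(w)} δ_{w,x}` for all `x ∈ W^J`.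
Here the coefficient `r_y` is `(-1)^{ℓ(y)} ⟨D, T_y^{J,a}⟩` (since
`⟨S_y^{J,a}, T_x^{J,a}⟩ = (-1)^{ℓ(y)} δ_{y,x}`), and the bar involution of `H^{J,a,*}`
is given by `⟨conj D, k⟩ = conj ⟨D, conj k⟩`. -/
theorem statement16 (K : KLRing R) (J : Set B) (Hk : Hecke cs R K.q)
    (bar : Hk.carrier →+* Hk.carrier) (hbar : IsBar K Hk bar)
    (a : R) (ha : a = K.q ∨ a = -1)
    (Mod : Type*) [AddCommGroup Mod] [Module R Mod]
    (φ : Hk.carrier →ₗ[R] Mod) (hInd : IsInduced Hk J a Mod φ)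
    (b : Module.Basis (minReps cs J) R Mod) (hb : ∀ u : minReps cs J, b u = φ (Hk.T u.1))
    (barJ : Mod →+ Mod) (hbarJ : ∀ h : Hk.carrier, barJ (φ h) = φ (bar h))
    (CJ : minReps cs J → Mod) (hCJ : ∀ u : minReps cs J, IsKLEltJ K b barJ u (CJ u))
    (w : minReps cs J) (D : Mod →ₗ[R] R)
    (hsupp : ∀ y : minReps cs J, D (b y) ≠ 0 → bruhatLE cs w.1 y.1)
    (hw : (-1 : R) ^ cs.length w.1 * D (b w) = 1)
    (hgr : ∀ y : minReps cs J, bruhatLE cs w.1 y.1 → y ≠ w →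
      (-1 : R) ^ cs.length y.1 * D (b y) ∈ K.gradeSum (cs.length y.1 - cs.length w.1))
    (hdual : ∀ k : Mod, K.conj (D (barJ k)) = K.q ^ cs.length w.1 * D k) :
    ∀ x : minReps cs J, D (CJ x) = if x = w then (-1 : R) ^ cs.length w.1 else 0 :=
  statement16_general K J Mod b barJ CJ hCJ w D hsupp hw hgr hdual

end KLPaper
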